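/- Let (Q, f) be a triangulation quiver with at least three vertices, and let β be an arrow with n_β = 3 and n_{β̄} = 3. Then β and β̄ are not a double arrow, i.e., t(β) ≠ t(β̄). (Step in the proof of Lemma 6.6, implication (iv) ⇒ (i).) -/

import Mathlib

/-- A triangulation quiver: a finite connected 2-regular quiver `(V, A, s, t)` together
with a permutation `f` of the arrows satisfying `s (f a) = t a` and `f ∘ f ∘ f = id`.
The field `bar` records, for each arrow `a`, the unique arrow `ᾱ ≠ α` with the same
source (it exists and is unique by 2-regularity), together with its defining properties. -/
structure TriangulationQuiver where
  V : Type
  A : Type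
  fintypeV : Fintype V
  fintypeA : Fintype A
  s : A → V
  t : A → V
  two_regular_src : ∀ v : V, Set.ncard {a : A | s a = v} = 2
  two_regular_tgt : ∀ v : V, Set.ncard {a : A | t a = v} = 2
  connected : ∀ u v : V,
    Relation.ReflTransGen (fun x y => ∃ a : A, (s a = x ∧ t a = y) ∨ (s a = y ∧ t a = x)) u v
  f : A → A
  f_cube : ∀ a : A, f (f (f a)) = a
  s_f : ∀ a : A, s (f a) = t a
  bar : A → A
  bar_src : ∀ a : A, s (bar a) = s a
  bar_ne : ∀ a : A, bar a ≠ a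
  bar_unique : ∀ a b : A, s b = s a → b ≠ a → b = bar a

attribute [instance] TriangulationQuiver.fintypeV TriangulationQuiver.fintypeA

namespace TriangulationQuiver

variable (Q : TriangulationQuiver)

/-- The second permutation of arrows: `g α = \overline{f α}`. -/
def g (a : Q.A) : Q.A := Q.bar (Q.f a)

/-- The `g`-orbit of an arrow. -/
def gOrbit (a : Q.A) : Set Q.A := {b : Q.A | ∃ k : ℕ, Q.g^[k] a = b}

/-- `n α` is the number of arrows in the `g`-orbit of `α`. -/
noncomputable def n (a : Q.A) : ℕ := (Q.gOrbit a).ncard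

end TriangulationQuiver

/-! If `t β = t β̄`, then `f β` and `f β̄` are the two arrows leaving `t β`, so `g β = f β̄`.
Two more steps of `g` lead from `f β̄` back to `β = \overline{β̄}` only if `f² β̄` is its own
bar, by `f³ = id` and injectivity of `f` and of the bar involution. -/

namespace Function

theorem ncard_setOf_iterate_eq_minimalPeriod {α : Type*} {f : α → α} {x : α}
    (hx : x ∈ periodicPts f) : {y | ∃ k, f^[k] x = y}.ncard = minimalPeriod f x := by
  have horbit : {y | ∃ k, f^[k] x = y} = (f^[·] x) '' Set.Iio (minimalPeriod f x) := by
    ext y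
    constructor
    · rintro ⟨k, rfl⟩
      exact ⟨k % minimalPeriod f x, Nat.mod_lt _ (minimalPeriod_pos_of_mem_periodicPts hx),
        iterate_mod_minimalPeriod_eq⟩
    · rintro ⟨k, -, rfl⟩
      exact ⟨k, rfl⟩
  rw [horbit, iterate_injOn_Iio_minimalPeriod.ncard_image, Set.ncard_Iio_nat]

end Function

namespace TriangulationQuiver

variable (Q : TriangulationQuiver)

theorem bar_involutive : Function.Involutive Q.bar := fun a =>
  (Q.bar_unique (Q.bar a) a (Q.bar_src a).symm (Q.bar_ne a).symm).symm

theorem f_injective : Function.Injective Q.f :=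
  Function.LeftInverse.injective (g := fun a => Q.f (Q.f a)) Q.f_cube

theorem g_injective : Function.Injective Q.g :=
  Q.bar_involutive.injective.comp Q.f_injective

theorem n_eq_minimalPeriod (a : Q.A) : Q.n a = Function.minimalPeriod Q.g a :=
  Function.ncard_setOf_iterate_eq_minimalPeriod (Q.g_injective.mem_periodicPts a)

theorem iterate_g_n_apply (a : Q.A) : Q.g^[Q.n a] a = a := by
  rw [n_eq_minimalPeriod]
  exact Function.iterate_minimalPeriod

theorem g_eq_f_bar_of_t_eq {b : Q.A} (h : Q.t b = Q.t (Q.bar b)) : Q.g b = Q.f (Q.bar b) := by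
  refine (Q.bar_unique (Q.f b) (Q.f (Q.bar b)) (by rw [Q.s_f, Q.s_f, h]) ?_).symm
  exact fun hf => Q.bar_ne b (Q.f_injective hf)

theorem g_g_f_ne_bar (a : Q.A) : Q.g (Q.g (Q.f a)) ≠ Q.bar a := by
  intro h
  have hf : Q.f (Q.bar (Q.f (Q.f a))) = Q.f (Q.f (Q.f a)) := by
    rw [Q.f_cube]
    exact Q.bar_involutive.injective h
  exact Q.bar_ne _ (Q.f_injective hf)

end TriangulationQuiver

theorem stmt_6_general (Q : TriangulationQuiver)
    (b : Q.A) (hb : Q.n b = 3) :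
    Q.t b ≠ Q.t (Q.bar b) := by
  intro h
  have hcycle : Q.g (Q.g (Q.g b)) = b := by
    have := Q.iterate_g_n_apply b
    rwa [hb] at this
  rw [Q.g_eq_f_bar_of_t_eq h] at hcycle
  exact Q.g_g_f_ne_bar (Q.bar b) (hcycle.trans (Q.bar_involutive b).symm)

/-- Step in the proof of Lemma 6.6, (iv) ⇒ (i): in a triangulation quiver with at least
three vertices, for an arrow `β` with `n_β = 3` and `n_{β̄} = 3`, the arrows `β` and `β̄`
are not a double arrow, i.e. `t(β) ≠ t(β̄)`. -/
theorem stmt_6 (Q : TriangulationQuiver) (h3 : 3 ≤ Fintype.card Q.V)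
    (b : Q.A) (hb : Q.n b = 3) (hbb : Q.n (Q.bar b) = 3) :
    Q.t b ≠ Q.t (Q.bar b) :=
  stmt_6_general Q b hb
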